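/- For the normalized matrix of maximum out-forests J̄ of a weighted digraph: J̄_{ij} ≠ 0 if and only if j belongs to some basis bicomponent and i is reachable from j by a directed path. -/

import Mathlib

open Finset

variable {n : ℕ}

/-- Kirchhoff (Laplacian) matrix of the weighted digraph whose arc `(j, i)`
has weight `a i j` (so `a i j` is the weight with which agent `i` accounts for `j`). -/
noncomputable def kirchhoff (a : Matrix (Fin n) (Fin n) ℝ) : Matrix (Fin n) (Fin n) ℝ :=
  Matrix.of fun i j => if i = j then ∑ k ∈ Finset.univ.erase i, a i k else -a i j

/-- `F` is a spanning diverging forest (out-forest) of the digraph with arcs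
`u → v` present iff `a v u > 0`: every arc of `F` is an arc of the digraph,
every vertex has in-degree at most one in `F`, and `F` has no directed cycles
(equivalently, no infinite directed walk). -/
def IsOutForest (a : Matrix (Fin n) (Fin n) ℝ) (F : Finset (Fin n × Fin n)) : Prop :=
  (∀ e ∈ F, 0 < a e.2 e.1) ∧
  (∀ u u' v : Fin n, (u, v) ∈ F → (u', v) ∈ F → u = u') ∧
  ¬ ∃ f : ℕ → Fin n, ∀ k, (f k, f (k + 1)) ∈ F

/-- Number of arcs of a maximum out-forest. -/
noncomputable def maxForestSize (a : Matrix (Fin n) (Fin n) ℝ) : ℕ :=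
  sSup {k | ∃ F, IsOutForest a F ∧ F.card = k}

/-- The out-forest dimension: the number of trees in any maximum out-forest. -/
noncomputable def outForestDim (a : Matrix (Fin n) (Fin n) ℝ) : ℕ :=
  n - maxForestSize a

open Classical in
/-- The set of maximum out-forests. -/
noncomputable def maxForests (a : Matrix (Fin n) (Fin n) ℝ) :
    Finset (Finset (Fin n × Fin n)) :=
  Finset.univ.filter fun F => IsOutForest a F ∧ F.card = maxForestSize a

/-- The weight of a forest: the product of its arc weights. -/
def forestWeight (a : Matrix (Fin n) (Fin n) ℝ) (F : Finset (Fin n × Fin n)) : ℝ :=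
  ∏ e ∈ F, a e.2 e.1

/-- In forest `F`, vertex `i` belongs to the tree diverging from (rooted at) `j`. -/
def InTreeRootedAt (F : Finset (Fin n × Fin n)) (j i : Fin n) : Prop :=
  (∀ u, (u, j) ∉ F) ∧ Relation.ReflTransGen (fun x y => (x, y) ∈ F) j i

open Classical in
/-- The normalized matrix of maximum out-forests. -/
noncomputable def barJ (a : Matrix (Fin n) (Fin n) ℝ) : Matrix (Fin n) (Fin n) ℝ :=
  Matrix.of fun i j =>
    (∑ F ∈ (maxForests a).filter (fun F => InTreeRootedAt F j i), forestWeight a F) /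
    (∑ F ∈ maxForests a, forestWeight a F)

/-- Reachability by directed paths (arc `u → v` present iff `a v u > 0`). -/
def Reach (a : Matrix (Fin n) (Fin n) ℝ) (u v : Fin n) : Prop :=
  Relation.ReflTransGen (fun x y => 0 < a y x) u v

/-- The strong component (bicomponent) of vertex `v`. -/
def strongClass (a : Matrix (Fin n) (Fin n) ℝ) (v : Fin n) : Set (Fin n) :=
  {u | Reach a u v ∧ Reach a v u}

/-- The set of strong components. -/
def strongClasses (a : Matrix (Fin n) (Fin n) ℝ) : Set (Set (Fin n)) :=
  {S | ∃ v, S = strongClass a v}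

/-- Basis bicomponents: strong components with no arcs entering from outside. -/
def basisClasses (a : Matrix (Fin n) (Fin n) ℝ) : Set (Set (Fin n)) :=
  {S | (∃ v, S = strongClass a v) ∧ ∀ u v, u ∉ S → v ∈ S → ¬ 0 < a v u}

/-- Weak reachability (underlying undirected graph). -/
def WeakReach (a : Matrix (Fin n) (Fin n) ℝ) (u v : Fin n) : Prop :=
  Relation.ReflTransGen (fun x y => 0 < a y x ∨ 0 < a x y) u v

/-- The set of weak components. -/
def weakClasses (a : Matrix (Fin n) (Fin n) ℝ) : Set (Set (Fin n)) :=
  {S | ∃ v, S = {u | WeakReach a u v}}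

/-!
Following arcs backwards from a vertex of a basis bicomponent `S` never leaves `S`, so every
out-forest has a root in each basis bicomponent, and at least as many roots as there are basis
bicomponents. Conversely, pick one vertex in each basis bicomponent, `j` in its own, and grow a
forest from them by repeatedly adding an arc that leaves the part already covered, first through
the vertices reachable from `j` and then through all the others. This yields an out-forest whose
roots are exactly the chosen vertices: it is maximum and `i` lies in the tree of `j` whenever `i`
is reachable from `j`. Counting roots also shows that every root of a maximum out-forest lies in a
basis bicomponent. Since every maximum out-forest has positive weight, `J̄ i j ≠ 0` exactly when
some maximum out-forest has `i` in the tree rooted at `j`.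
-/

open Relation

theorem Relation.ReflTransGen.exists_rel_leaving {α : Type*} {r : α → α → Prop}
    {p : α → Prop} {x y : α} (h : ReflTransGen r x y) (hx : p x) (hy : ¬ p y) :
    ∃ u v, r u v ∧ p u ∧ ¬ p v := by
  induction h with
  | refl => exact absurd hx hy
  | @tail b c _ hbc ih =>
    by_cases hb : p b
    · exact ⟨b, c, hbc, hb, hy⟩
    · exact ih hb

section OutForest

variable {a : Matrix (Fin n) (Fin n) ℝ} {F : Finset (Fin n × Fin n)}

def roots (F : Finset (Fin n × Fin n)) : Finset (Fin n) :=
  univ.filter fun v => ∀ u, (u, v) ∉ F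

lemma mem_roots {v : Fin n} : v ∈ roots F ↔ ∀ u, (u, v) ∉ F := by
  simp [roots]

lemma eq_of_mem_roots_of_reflTransGen {u v : Fin n} (hv : v ∈ roots F)
    (h : ReflTransGen (fun x y => (x, y) ∈ F) u v) : u = v := by
  rcases h.cases_tail with h | ⟨w, -, hw⟩
  · exact h.symm
  · exact absurd hw (mem_roots.mp hv w)

lemma IsOutForest.empty : IsOutForest a ∅ :=
  ⟨by simp, by simp, fun ⟨f, hf⟩ => notMem_empty _ (hf 0)⟩

lemma IsOutForest.reach_of_reflTransGen (hF : IsOutForest a F) {x y : Fin n}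
    (h : ReflTransGen (fun x y => (x, y) ∈ F) x y) : Reach a x y :=
  ReflTransGen.mono (fun u v huv => hF.1 (u, v) huv) _ _ h

lemma IsOutForest.card_add_card_roots (hF : IsOutForest a F) : #F + #(roots F) = n := by
  have hinj : Set.InjOn Prod.snd (F : Set (Fin n × Fin n)) := by
    rintro ⟨u, v⟩ huv ⟨u', v'⟩ hu'v' (rfl : v = v')
    rw [hF.2.1 u u' v huv hu'v']
  have himage : F.image Prod.snd = (roots F)ᶜ := by
    ext v
    simp [mem_roots]
  rw [← card_image_of_injOn hinj, himage, card_compl_add_card, Fintype.card_fin]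

lemma IsOutForest.wellFounded_parent (hF : IsOutForest a F) :
    WellFounded fun x y : Fin n => (x, y) ∈ F := by
  -- the acyclicity axiom says that the reversed relation is well-founded; on a finite type
  -- this transfers to the relation itself through its irreflexive transitive closure
  have hrev : WellFounded fun x y : Fin n => (y, x) ∈ F :=
    wellFounded_iff_isEmpty_descending_chain.mpr ⟨fun ⟨f, hf⟩ => hF.2.2 ⟨f, hf⟩⟩
  have : Std.Irrefl (TransGen fun x y : Fin n => (x, y) ∈ F) :=
    ⟨fun z hz => hrev.transGen.irrefl.irrefl z (transGen_swap.mpr hz)⟩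
  exact Subrelation.wf (r := TransGen fun x y : Fin n => (x, y) ∈ F)
    (fun h => TransGen.single h) (Finite.wellFounded_of_trans_of_irrefl _)

lemma IsOutForest.exists_mem_roots_reflTransGen (hF : IsOutForest a F) (v : Fin n) :
    ∃ r ∈ roots F, ReflTransGen (fun x y => (x, y) ∈ F) r v := by
  induction v using hF.wellFounded_parent.induction with
  | _ v ih =>
  by_cases hv : v ∈ roots F
  · exact ⟨v, hv, .refl⟩
  · obtain ⟨u, hu⟩ : ∃ u, (u, v) ∈ F := by simpa [mem_roots] using hv
    obtain ⟨r, hr, hru⟩ := ih u hu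
    exact ⟨r, hr, hru.tail hu⟩

lemma IsOutForest.insert_arc (hF : IsOutForest a F) {x y : Fin n} (hxy : 0 < a y x)
    (hne : x ≠ y) (hy : ∀ e ∈ F, e.1 ≠ y ∧ e.2 ≠ y) :
    IsOutForest a (insert (x, y) F) := by
  refine ⟨(forall_mem_insert _ _ _).mpr ⟨hxy, hF.1⟩, ?_, ?_⟩
  · intro u u' v hu hu'
    simp only [mem_insert, Prod.mk.injEq] at hu hu'
    rcases hu with ⟨rfl, rfl⟩ | hu <;> rcases hu' with ⟨rfl, hv⟩ | hu'
    · rfl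
    · exact ((hy _ hu').2 rfl).elim
    · exact ((hy _ hu).2 hv).elim
    · exact hF.2.1 u u' v hu hu'
  · -- `y` has no outgoing arc, so no walk can use the new arc `(x, y)`
    rintro ⟨f, hf⟩
    refine hF.2.2 ⟨f, fun k => (mem_insert.mp (hf k)).resolve_left fun hk => ?_⟩
    have hfy : f (k + 1) = y := congrArg Prod.snd hk
    rcases mem_insert.mp (hf (k + 1)) with h | h
    · exact hne (hfy ▸ congrArg Prod.fst h).symm
    · exact (hy _ h).1 hfy

lemma IsOutForest.exists_extension {G : Finset (Fin n × Fin n)} {C D : Finset (Fin n)}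
    (hG : IsOutForest a G) (hGC : ∀ e ∈ G, e.1 ∈ C ∧ e.2 ∈ C) (hCD : C ⊆ D)
    (hD : ∀ x ∈ D, ∀ y, 0 < a y x → y ∈ D)
    (hreach : ∀ v ∈ D, ∃ c ∈ C, Reach a c v) :
    ∃ G', IsOutForest a G' ∧ G ⊆ G' ∧ (∀ e ∈ G', e.1 ∈ D ∧ e.2 ∈ D) ∧
      (∀ e ∈ G', e.2 ∈ C → e ∈ G) ∧
      ∀ v ∈ D, ∃ c ∈ C, ReflTransGen (fun x y => (x, y) ∈ G') c v := by
  by_cases hDC : D ⊆ C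
  · exact ⟨G, hG, subset_rfl, fun e he => ⟨hCD (hGC e he).1, hCD (hGC e he).2⟩,
      fun e he _ => he, fun v hv => ⟨v, hDC hv, .refl⟩⟩
  obtain ⟨v, hvD, hvC⟩ := not_subset.mp hDC
  obtain ⟨c, hc, hcv⟩ := hreach v hvD
  obtain ⟨x, y, hxy, hx, hy⟩ := hcv.exists_rel_leaving (p := (· ∈ C)) hc hvC
  have hyD : y ∈ D := hD x (hCD hx) y hxy
  have hG₁ : IsOutForest a (insert (x, y) G) :=
    hG.insert_arc hxy (fun h => hy (h ▸ hx))
      fun e he => ⟨fun h => hy (h ▸ (hGC e he).1), fun h => hy (h ▸ (hGC e he).2)⟩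
  have : #(D \ insert y C) < #(D \ C) := by
    rw [sdiff_insert]
    exact card_erase_lt_of_mem (mem_sdiff.mpr ⟨hyD, hy⟩)
  obtain ⟨G', hG', hG₁G', hG'D, hG'C, hpath⟩ := hG₁.exists_extension (C := insert y C)
    (by
      rw [forall_mem_insert]
      exact ⟨⟨mem_insert_of_mem hx, mem_insert_self y C⟩,
        fun e he => ⟨mem_insert_of_mem (hGC e he).1, mem_insert_of_mem (hGC e he).2⟩⟩)
    (insert_subset hyD hCD) hD
    fun v hv => let ⟨c, hc, hcv⟩ := hreach v hv; ⟨c, mem_insert_of_mem hc, hcv⟩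
  refine ⟨G', hG', (subset_insert _ _).trans hG₁G', hG'D, fun e he heC => ?_, fun v hv => ?_⟩
  · rcases mem_insert.mp (hG'C e he (mem_insert_of_mem heC)) with rfl | h
    · exact absurd heC hy
    · exact h
  · obtain ⟨c, hc, hcv⟩ := hpath v hv
    rcases mem_insert.mp hc with rfl | hc
    · exact ⟨x, hx, ReflTransGen.head (hG₁G' (mem_insert_self _ _)) hcv⟩
    · exact ⟨c, hc, hcv⟩
termination_by #(D \ C)

end OutForest

section StrongClass

variable {a : Matrix (Fin n) (Fin n) ℝ}

lemma mem_strongClass_self (v : Fin n) : v ∈ strongClass a v := ⟨.refl, .refl⟩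

lemma strongClass_eq_of_mem {u v : Fin n} (h : u ∈ strongClass a v) :
    strongClass a u = strongClass a v := by
  obtain ⟨huv, hvu⟩ := h
  ext x
  exact ⟨fun ⟨hxu, hux⟩ => ⟨hxu.trans huv, hvu.trans hux⟩,
    fun ⟨hxv, hvx⟩ => ⟨hxv.trans hvu, huv.trans hvx⟩⟩

lemma exists_mem_basisClasses_iff {v : Fin n} :
    (∃ S ∈ basisClasses a, v ∈ S) ↔ strongClass a v ∈ basisClasses a := by
  refine ⟨?_, fun h => ⟨_, h, mem_strongClass_self v⟩⟩
  rintro ⟨S, hS, hv⟩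
  obtain ⟨w, rfl⟩ := hS.1
  rwa [strongClass_eq_of_mem hv]

lemma mem_of_reach_of_mem {S : Set (Fin n)} (hS : S ∈ basisClasses a) {x y : Fin n}
    (hxy : Reach a x y) (hy : y ∈ S) : x ∈ S := by
  by_contra hx
  obtain ⟨u, v, huv, hu, hv⟩ := hxy.exists_rel_leaving (p := (· ∉ S)) hx (not_not_intro hy)
  exact hS.2 u v hu (not_not.mp hv) huv

lemma exists_strongClass_mem_basisClasses_reach (v : Fin n) :
    ∃ u, strongClass a u ∈ basisClasses a ∧ Reach a u v := by
  let lt : Fin n → Fin n → Prop := fun x y => Reach a x y ∧ ¬ Reach a y x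
  have : IsTrans (Fin n) lt :=
    ⟨fun _ _ _ hxy hyz => ⟨hxy.1.trans hyz.1, fun hzx => hxy.2 (hyz.1.trans hzx)⟩⟩
  have : Std.Irrefl lt := ⟨fun _ hx => hx.2 hx.1⟩
  obtain ⟨u, huv, hmin⟩ :=
    (Finite.wellFounded_of_trans_of_irrefl lt).has_min {u | Reach a u v} ⟨v, .refl⟩
  refine ⟨u, ⟨⟨u, rfl⟩, fun w w' hw hw' hww' => ?_⟩, huv⟩
  have hwu : Reach a w u := ReflTransGen.head hww' hw'.1
  exact hmin w (hwu.trans huv) ⟨hwu, fun huw => hw ⟨hwu, huw⟩⟩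

end StrongClass

section Transversal

variable {a : Matrix (Fin n) (Fin n) ℝ} {R : Finset (Fin n)}

def IsBasisTransversal (a : Matrix (Fin n) (Fin n) ℝ) (R : Finset (Fin n)) : Prop :=
  (∀ r ∈ R, strongClass a r ∈ basisClasses a) ∧
  (∀ r ∈ R, ∀ r' ∈ R, r ∈ strongClass a r' → r = r') ∧
  ∀ S ∈ basisClasses a, ∃ r ∈ R, r ∈ S

lemma exists_isBasisTransversal (j : Fin n) :
    ∃ R, IsBasisTransversal a R ∧ (strongClass a j ∈ basisClasses a → j ∈ R) := by
  classical
  -- in each basis class take the vertex of least `key`; `j` has the least key of all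
  let key : Fin n → ℕ := fun w => if w = j then 0 else w + 1
  have hkey : Function.Injective key := by
    intro x y h
    simp only [key] at h
    split_ifs at h with hx hy hy
    · exact hx.trans hy.symm
    · exact Fin.ext (by omega)
  refine ⟨univ.filter fun v => strongClass a v ∈ basisClasses a ∧
      ∀ w ∈ strongClass a v, key v ≤ key w,
    ⟨fun r hr => (mem_filter.mp hr).2.1, ?_, ?_⟩, fun hj => ?_⟩
  · intro r hr r' hr' hrr'
    have hr'r : r' ∈ strongClass a r := strongClass_eq_of_mem hrr' ▸ mem_strongClass_self r'
    exact hkey (le_antisymm ((mem_filter.mp hr).2.2 r' hr'r) ((mem_filter.mp hr').2.2 r hrr'))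
  · rintro S ⟨⟨u, rfl⟩, hS⟩
    obtain ⟨v, hv, hmin⟩ := exists_min_image (univ.filter (· ∈ strongClass a u)) key
      ⟨u, by simpa using mem_strongClass_self u⟩
    replace hv : v ∈ strongClass a u := (mem_filter.mp hv).2
    refine ⟨v, mem_filter.mpr ⟨mem_univ v, ?_, fun w hw => hmin w ?_⟩, hv⟩
    · rw [strongClass_eq_of_mem hv]
      exact ⟨⟨u, rfl⟩, hS⟩
    · rw [strongClass_eq_of_mem hv] at hw
      simpa using hw
  · exact mem_filter.mpr ⟨mem_univ j, hj, fun w _ => by simp [key]⟩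

lemma IsBasisTransversal.exists_reach (hR : IsBasisTransversal a R) (v : Fin n) :
    ∃ r ∈ R, Reach a r v := by
  obtain ⟨u, hu, huv⟩ := exists_strongClass_mem_basisClasses_reach (a := a) v
  obtain ⟨r, hr, hru⟩ := hR.2.2 _ hu
  exact ⟨r, hr, hru.1.trans huv⟩

open Classical in
lemma IsBasisTransversal.card_le_card_roots (hR : IsBasisTransversal a R)
    {F : Finset (Fin n × Fin n)} (hF : IsOutForest a F) :
    #R ≤ #((roots F).filter fun v => strongClass a v ∈ basisClasses a) := by
  choose φ hφ hφr using hF.exists_mem_roots_reflTransGen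
  have hφS : ∀ r ∈ R, φ r ∈ strongClass a r := fun r hr =>
    mem_of_reach_of_mem (hR.1 r hr) (hF.reach_of_reflTransGen (hφr r)) (mem_strongClass_self r)
  refine card_le_card_of_injOn φ (fun r hr => mem_filter.mpr ⟨hφ r, ?_⟩)
    fun r hr r' hr' h => ?_
  · rw [strongClass_eq_of_mem (hφS r hr)]
    exact hR.1 r hr
  · have hclass : strongClass a r = strongClass a r' := by
      rw [← strongClass_eq_of_mem (hφS r hr), ← strongClass_eq_of_mem (hφS r' hr'), h]
    exact hR.2.1 r hr r' hr' (hclass ▸ mem_strongClass_self r)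

end Transversal

section MaxForest

variable {a : Matrix (Fin n) (Fin n) ℝ} {F G : Finset (Fin n × Fin n)} {R : Finset (Fin n)}

lemma bddAbove_outForest_card : BddAbove {k | ∃ F, IsOutForest a F ∧ #F = k} := by
  refine ⟨Fintype.card (Fin n × Fin n), ?_⟩
  rintro k ⟨F, -, rfl⟩
  exact card_le_univ F

lemma IsOutForest.card_le_maxForestSize (hF : IsOutForest a F) : #F ≤ maxForestSize a :=
  le_csSup bddAbove_outForest_card ⟨F, hF, rfl⟩

lemma exists_isOutForest_card_eq_maxForestSize :
    ∃ F, IsOutForest a F ∧ #F = maxForestSize a :=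
  Nat.sSup_mem (s := {k | ∃ F, IsOutForest a F ∧ #F = k}) ⟨0, ∅, IsOutForest.empty, rfl⟩
    bddAbove_outForest_card

lemma mem_maxForests : F ∈ maxForests a ↔ IsOutForest a F ∧ #F = maxForestSize a := by
  classical
  simp [maxForests]

lemma IsBasisTransversal.mem_maxForests_of_roots_subset (hR : IsBasisTransversal a R)
    (hG : IsOutForest a G) (hGR : roots G ⊆ R) : G ∈ maxForests a := by
  classical
  obtain ⟨F, hF, hFmax⟩ := exists_isOutForest_card_eq_maxForestSize (a := a)
  have hFG : #F + #(roots F) = #G + #(roots G) := by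
    rw [hF.card_add_card_roots, hG.card_add_card_roots]
  have hroots : #(roots G) ≤ #(roots F) :=
    (card_le_card hGR).trans ((hR.card_le_card_roots hF).trans (card_filter_le _ _))
  exact mem_maxForests.mpr ⟨hG, le_antisymm hG.card_le_maxForestSize (by omega)⟩

lemma IsBasisTransversal.exists_isOutForest_inTreeRootedAt (hR : IsBasisTransversal a R)
    {i j : Fin n} (hj : j ∈ R) (hji : Reach a j i) :
    ∃ G, IsOutForest a G ∧ roots G ⊆ R ∧ InTreeRootedAt G j i := by
  classical
  set D := univ.filter (Reach a j ·)
  have hjD : j ∈ D := mem_filter.mpr ⟨mem_univ j, .refl⟩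
  obtain ⟨T, hT, -, hTD, hTj, hjT⟩ := IsOutForest.empty.exists_extension (C := {j}) (D := D)
    (by simp) (singleton_subset_iff.mpr hjD)
    (fun x hx y hxy => mem_filter.mpr ⟨mem_univ y, (mem_filter.mp hx).2.tail hxy⟩)
    fun v hv => ⟨j, mem_singleton_self j, (mem_filter.mp hv).2⟩
  replace hjT : ∀ v ∈ D, ReflTransGen (fun x y => (x, y) ∈ T) j v := fun v hv => by
    obtain ⟨c, hc, hcv⟩ := hjT v hv
    rwa [mem_singleton.mp hc] at hcv
  obtain ⟨G, hG, hTG, -, hGT, hcover⟩ := hT.exists_extension (C := D ∪ R) (D := univ)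
    (fun e he => ⟨mem_union_left _ (hTD e he).1, mem_union_left _ (hTD e he).2⟩)
    (subset_univ _) (by simp)
    fun v _ => let ⟨r, hr, hrv⟩ := hR.exists_reach v; ⟨r, mem_union_right _ hr, hrv⟩
  refine ⟨G, hG, fun v hv => ?_, fun u hu => ?_, ?_⟩
  · obtain ⟨c, hc, hcv⟩ := hcover v (mem_univ v)
    obtain rfl := eq_of_mem_roots_of_reflTransGen hv hcv
    rcases mem_union.mp hc with hcD | hcR
    · rcases (hjT c hcD).cases_tail with rfl | ⟨u, -, hu⟩
      · exact hj
      · exact absurd (hTG hu) (mem_roots.mp hv u)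
    · exact hcR
  · simpa using hTj _ (hGT _ hu (mem_union_left _ hjD))
  · exact ReflTransGen.mono (fun _ _ h => hTG h) _ _ (hjT i (by simpa [D] using hji))

lemma strongClass_mem_basisClasses_of_mem_roots (hF : F ∈ maxForests a) {v : Fin n}
    (hv : v ∈ roots F) : strongClass a v ∈ basisClasses a := by
  classical
  obtain ⟨R, hR, -⟩ := exists_isBasisTransversal (a := a) v
  obtain ⟨r, hr, -⟩ := hR.exists_reach v
  obtain ⟨G, hG, hGR, -⟩ := hR.exists_isOutForest_inTreeRootedAt hr .refl
  obtain ⟨hF, hFmax⟩ := mem_maxForests.mp hF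
  have hFG : #F + #(roots F) = #G + #(roots G) := by
    rw [hF.card_add_card_roots, hG.card_add_card_roots]
  have hGmax := (mem_maxForests.mp (hR.mem_maxForests_of_roots_subset hG hGR)).2
  have hle := (card_le_card hGR).trans (hR.card_le_card_roots hF)
  have hfilter := eq_of_subset_of_card_le
    (filter_subset (fun v => strongClass a v ∈ basisClasses a) (roots F)) (by omega)
  rw [← hfilter] at hv
  exact (mem_filter.mp hv).2

lemma barJ_ne_zero_iff_exists (i j : Fin n) :
    barJ a i j ≠ 0 ↔ ∃ F ∈ maxForests a, InTreeRootedAt F j i := by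
  classical
  have hpos : ∀ F ∈ maxForests a, 0 < forestWeight a F := fun F hF =>
    prod_pos fun e he => (mem_maxForests.mp hF).1.1 e he
  have hne : (maxForests a).Nonempty := by
    obtain ⟨F, hF⟩ := exists_isOutForest_card_eq_maxForestSize (a := a)
    exact ⟨F, mem_maxForests.mpr hF⟩
  rw [barJ, Matrix.of_apply, div_ne_zero_iff, and_iff_left (sum_pos hpos hne).ne']
  constructor
  · intro h
    by_contra! hno
    exact h (by rw [filter_false_of_mem hno, sum_empty])
  · rintro ⟨F, hF, hFji⟩
    exact (sum_pos (fun F hF => hpos F (mem_filter.mp hF).1)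
      ⟨F, mem_filter.mpr ⟨hF, hFji⟩⟩).ne'

end MaxForest

theorem barJ_ne_zero_iff_general {n : ℕ} (a : Matrix (Fin n) (Fin n) ℝ)
    (i j : Fin n) :
    barJ a i j ≠ 0 ↔ ((∃ S ∈ basisClasses a, j ∈ S) ∧ Reach a j i) := by
  rw [barJ_ne_zero_iff_exists, exists_mem_basisClasses_iff]
  constructor
  · rintro ⟨F, hF, hjroot, hji⟩
    exact ⟨strongClass_mem_basisClasses_of_mem_roots hF (mem_roots.mpr hjroot),
      (mem_maxForests.mp hF).1.reach_of_reflTransGen hji⟩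
  · rintro ⟨hj, hji⟩
    obtain ⟨R, hR, hjR⟩ := exists_isBasisTransversal (a := a) j
    obtain ⟨G, hG, hGR, hGji⟩ := hR.exists_isOutForest_inTreeRootedAt (hjR hj) hji
    exact ⟨G, hR.mem_maxForests_of_roots_subset hG hGR, hGji⟩

/-- `J̄_{ij} ≠ 0` iff `j` belongs to some basis bicomponent and `i` is reachable
from `j` by a directed path. -/
theorem barJ_ne_zero_iff {n : ℕ} (a : Matrix (Fin n) (Fin n) ℝ)
    (hnn : ∀ i j, 0 ≤ a i j) (i j : Fin n) :
    barJ a i j ≠ 0 ↔ ((∃ S ∈ basisClasses a, j ∈ S) ∧ Reach a j i) :=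
  barJ_ne_zero_iff_general a i j
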